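/- Let 0 < c < 1 and let Ã₊, Ã₋ be nonnegative matrices with Ã₊ + Ã₋ row-stochastic. Then the SRWR fixed-point system r⁺ = (1−c)(Ã₊ᵀ r⁺ + Ã₋ᵀ r⁻) + c·q, r⁻ = (1−c)(Ã₋ᵀ r⁺ + Ã₊ᵀ r⁻) has a unique solution (r⁺, r⁻), and the total mass satisfies the property that the sum of all entries of r⁺ + r⁻ equals the sum of the entries of q. -/
import Mathlib


open Finset Matrix

lemma srwr_swap {n : ℕ} (B : Matrix (Fin n) (Fin n) ℝ) (v : Fin n → ℝ) :
    ∑ i, ∑ j, B j i * v j = ∑ j, (∑ i, B j i) * v j := by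
  rw [Finset.sum_comm]
  exact Finset.sum_congr rfl fun j _ => by rw [Finset.sum_mul]

lemma srwr_step {n : ℕ} (c : ℝ) (B C : Matrix (Fin n) (Fin n) ℝ) (v w : Fin n → ℝ) :
    ∑ i, (1-c) * (∑ j, B j i * v j + ∑ j, C j i * w j)
      = (1-c) * ∑ j, ((∑ i, B j i) * v j + (∑ i, C j i) * w j) := by
  rw [← Finset.mul_sum]
  congr 1
  rw [Finset.sum_add_distrib, srwr_swap, srwr_swap, ← Finset.sum_add_distrib]

/-- For `0 < c < 1`, nonnegative `Ã₊, Ã₋` with `Ã₊ + Ã₋` row-stochastic, and a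
probability vector `q`, the SRWR fixed-point system has a unique solution
`(r⁺, r⁻)`, whose total mass equals the total mass of `q`. -/
theorem stmt9 {n : ℕ} (c : ℝ) (hc0 : 0 < c) (hc1 : c < 1)
    (Ap Am : Matrix (Fin n) (Fin n) ℝ)
    (hApn : ∀ i j, 0 ≤ Ap i j) (hAmn : ∀ i j, 0 ≤ Am i j)
    (hrow : ∀ i, ∑ j, (Ap i j + Am i j) = 1)
    (q : Fin n → ℝ) (hq0 : ∀ i, 0 ≤ q i) (hq1 : ∑ i, q i = 1) :
    (∃! r : (Fin n → ℝ) × (Fin n → ℝ),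
        r.1 = (1 - c) • (Ap.transpose *ᵥ r.1 + Am.transpose *ᵥ r.2) + c • q ∧
        r.2 = (1 - c) • (Am.transpose *ᵥ r.1 + Ap.transpose *ᵥ r.2)) ∧
    (∀ r : (Fin n → ℝ) × (Fin n → ℝ),
        (r.1 = (1 - c) • (Ap.transpose *ᵥ r.1 + Am.transpose *ᵥ r.2) + c • q ∧
         r.2 = (1 - c) • (Am.transpose *ᵥ r.1 + Ap.transpose *ᵥ r.2)) →
        ∑ i, (r.1 i + r.2 i) = ∑ i, q i) := by
  have hc' : (0:ℝ) ≤ 1 - c := by linarith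
  -- the linear map whose kernel controls uniqueness
  set M : ((Fin n → ℝ) × (Fin n → ℝ)) →ₗ[ℝ] ((Fin n → ℝ) × (Fin n → ℝ)) :=
    LinearMap.prod
      ((Matrix.toLin' Ap.transpose).comp (LinearMap.fst ℝ _ _)
        + (Matrix.toLin' Am.transpose).comp (LinearMap.snd ℝ _ _))
      ((Matrix.toLin' Am.transpose).comp (LinearMap.fst ℝ _ _)
        + (Matrix.toLin' Ap.transpose).comp (LinearMap.snd ℝ _ _)) with hM
  set T : ((Fin n → ℝ) × (Fin n → ℝ)) →ₗ[ℝ] ((Fin n → ℝ) × (Fin n → ℝ)) :=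
    LinearMap.id - (1-c) • M with hTdef
  have hTapply : ∀ r : (Fin n → ℝ) × (Fin n → ℝ),
      T r = (r.1 - (1-c) • (Ap.transpose *ᵥ r.1 + Am.transpose *ᵥ r.2),
             r.2 - (1-c) • (Am.transpose *ᵥ r.1 + Ap.transpose *ᵥ r.2)) := by
    intro r
    simp [hTdef, hM, Matrix.toLin'_apply, Prod.smul_mk, Prod.ext_iff]
  -- injectivity via an ℓ¹ estimate
  have hinj : Function.Injective T := by
    rw [← LinearMap.ker_eq_bot, LinearMap.ker_eq_bot']
    intro r hr
    rw [hTapply r] at hr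
    have hr1 := congrArg Prod.fst hr
    have hr2 := congrArg Prod.snd hr
    simp only [Prod.fst_zero, Prod.snd_zero, sub_eq_zero] at hr1 hr2
    have h1 : ∀ i, r.1 i = (1-c) * (∑ j, Ap j i * r.1 j + ∑ j, Am j i * r.2 j) := by
      intro i
      conv_lhs => rw [hr1]
      simp [Matrix.mulVec, dotProduct, mul_add]
    have h2 : ∀ i, r.2 i = (1-c) * (∑ j, Am j i * r.1 j + ∑ j, Ap j i * r.2 j) := by
      intro i
      conv_lhs => rw [hr2]
      simp [Matrix.mulVec, dotProduct, mul_add]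
    set S : ℝ := ∑ i, (|r.1 i| + |r.2 i|) with hS
    have hS0 : 0 ≤ S := Finset.sum_nonneg fun i _ =>
      add_nonneg (abs_nonneg _) (abs_nonneg _)
    have key : S ≤ (1-c) * S := by
      have bound1 : ∀ i, |r.1 i| ≤
          (1-c) * (∑ j, Ap j i * |r.1 j| + ∑ j, Am j i * |r.2 j|) := by
        intro i
        rw [h1 i, abs_mul, abs_of_nonneg hc']
        gcongr
        calc |∑ j, Ap j i * r.1 j + ∑ j, Am j i * r.2 j|
            ≤ |∑ j, Ap j i * r.1 j| + |∑ j, Am j i * r.2 j| := abs_add_le _ _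
          _ ≤ (∑ j, |Ap j i * r.1 j|) + ∑ j, |Am j i * r.2 j| := by
              gcongr <;> exact Finset.abs_sum_le_sum_abs _ _
          _ = (∑ j, Ap j i * |r.1 j|) + ∑ j, Am j i * |r.2 j| := by
              congr 1 <;> refine Finset.sum_congr rfl fun j _ => ?_ <;>
                rw [abs_mul, abs_of_nonneg (by first | exact hApn j i | exact hAmn j i)]
      have bound2 : ∀ i, |r.2 i| ≤
          (1-c) * (∑ j, Am j i * |r.1 j| + ∑ j, Ap j i * |r.2 j|) := by
        intro i
        rw [h2 i, abs_mul, abs_of_nonneg hc']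
        gcongr
        calc |∑ j, Am j i * r.1 j + ∑ j, Ap j i * r.2 j|
            ≤ |∑ j, Am j i * r.1 j| + |∑ j, Ap j i * r.2 j| := abs_add_le _ _
          _ ≤ (∑ j, |Am j i * r.1 j|) + ∑ j, |Ap j i * r.2 j| := by
              gcongr <;> exact Finset.abs_sum_le_sum_abs _ _
          _ = (∑ j, Am j i * |r.1 j|) + ∑ j, Ap j i * |r.2 j| := by
              congr 1 <;> refine Finset.sum_congr rfl fun j _ => ?_ <;>
                rw [abs_mul, abs_of_nonneg (by first | exact hApn j i | exact hAmn j i)]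
      calc S ≤ ∑ i, ((1-c) * (∑ j, Ap j i * |r.1 j| + ∑ j, Am j i * |r.2 j|)
                + (1-c) * (∑ j, Am j i * |r.1 j| + ∑ j, Ap j i * |r.2 j|)) := by
              exact Finset.sum_le_sum fun i _ => add_le_add (bound1 i) (bound2 i)
        _ = (1-c) * (∑ j, ((∑ i, Ap j i) * |r.1 j| + (∑ i, Am j i) * |r.2 j|))
              + (1-c) * (∑ j, ((∑ i, Am j i) * |r.1 j| + (∑ i, Ap j i) * |r.2 j|)) := by
              rw [Finset.sum_add_distrib, srwr_step c Ap Am, srwr_step c Am Ap]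
        _ = (1-c) * S := by
              rw [hS, ← mul_add, ← Finset.sum_add_distrib, Finset.mul_sum, Finset.mul_sum]
              refine Finset.sum_congr rfl fun j _ => ?_
              have h := hrow j
              rw [Finset.sum_add_distrib] at h
              linear_combination ((1-c) * (|r.1 j| + |r.2 j|)) * h
    have hSz : S = 0 := by nlinarith
    have hzero : ∀ i, |r.1 i| + |r.2 i| = 0 := fun i =>
      (Finset.sum_eq_zero_iff_of_nonneg (fun i _ =>
        add_nonneg (abs_nonneg (r.1 i)) (abs_nonneg (r.2 i)))).mp hSz i (Finset.mem_univ i)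
    have e1 : r.1 = 0 := funext fun i => abs_eq_zero.mp (by
      have h := hzero i; have := abs_nonneg (r.1 i); have := abs_nonneg (r.2 i); linarith)
    have e2 : r.2 = 0 := funext fun i => abs_eq_zero.mp (by
      have h := hzero i; have := abs_nonneg (r.1 i); have := abs_nonneg (r.2 i); linarith)
    exact Prod.ext e1 e2
  have hsurj : Function.Surjective T := LinearMap.injective_iff_surjective.mp hinj
  -- fixed-point equations ↔ T r = (c•q, 0)
  have hiff : ∀ r : (Fin n → ℝ) × (Fin n → ℝ),
      (r.1 = (1 - c) • (Ap.transpose *ᵥ r.1 + Am.transpose *ᵥ r.2) + c • q ∧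
       r.2 = (1 - c) • (Am.transpose *ᵥ r.1 + Ap.transpose *ᵥ r.2)) ↔
      T r = (c • q, 0) := by
    intro r
    rw [hTapply r, Prod.ext_iff]
    constructor
    · rintro ⟨e1, e2⟩
      refine ⟨?_, ?_⟩
      · show r.1 - _ = c • q
        rw [sub_eq_iff_eq_add, add_comm]; exact e1
      · show r.2 - _ = (0 : Fin n → ℝ)
        rw [sub_eq_zero]; exact e2
    · rintro ⟨e1, e2⟩
      have e1' : r.1 - (1-c) • (Ap.transpose *ᵥ r.1 + Am.transpose *ᵥ r.2) = c • q := e1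
      have e2' : r.2 - (1-c) • (Am.transpose *ᵥ r.1 + Ap.transpose *ᵥ r.2) = 0 := e2
      rw [sub_eq_iff_eq_add, add_comm] at e1'
      rw [sub_eq_zero] at e2'
      exact ⟨e1', e2'⟩
  constructor
  · obtain ⟨r, hr⟩ := hsurj (c • q, 0)
    exact ⟨r, (hiff r).mpr hr, fun y hy => hinj (((hiff y).mp hy).trans hr.symm)⟩
  · rintro r ⟨e1, e2⟩
    have h1 : ∀ i, r.1 i = (1-c) * (∑ j, Ap j i * r.1 j + ∑ j, Am j i * r.2 j) + c * q i := by
      intro i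
      conv_lhs => rw [e1]
      simp [Matrix.mulVec, dotProduct, mul_add]
    have h2 : ∀ i, r.2 i = (1-c) * (∑ j, Am j i * r.1 j + ∑ j, Ap j i * r.2 j) := by
      intro i
      conv_lhs => rw [e2]
      simp [Matrix.mulVec, dotProduct, mul_add]
    set S : ℝ := ∑ i, (r.1 i + r.2 i) with hS
    have key : S = (1-c) * S + c * ∑ i, q i := by
      calc S = ∑ i, ((1-c) * (∑ j, Ap j i * r.1 j + ∑ j, Am j i * r.2 j) + c * q i
                + (1-c) * (∑ j, Am j i * r.1 j + ∑ j, Ap j i * r.2 j)) := by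
              exact Finset.sum_congr rfl fun i _ => by rw [h1 i, h2 i]
        _ = ((∑ i, (1-c) * (∑ j, Ap j i * r.1 j + ∑ j, Am j i * r.2 j))
              + ∑ i, c * q i)
              + ∑ i, (1-c) * (∑ j, Am j i * r.1 j + ∑ j, Ap j i * r.2 j) := by
              rw [Finset.sum_add_distrib, Finset.sum_add_distrib]
        _ = ((1-c) * (∑ j, ((∑ i, Ap j i) * r.1 j + (∑ i, Am j i) * r.2 j))
              + c * ∑ i, q i)
              + (1-c) * (∑ j, ((∑ i, Am j i) * r.1 j + (∑ i, Ap j i) * r.2 j)) := by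
              rw [srwr_step c Ap Am, srwr_step c Am Ap, ← Finset.mul_sum]
        _ = (1-c) * S + c * ∑ i, q i := by
              rw [hS]
              have key' : (∑ j, ((∑ i, Ap j i) * r.1 j + (∑ i, Am j i) * r.2 j))
                  + (∑ j, ((∑ i, Am j i) * r.1 j + (∑ i, Ap j i) * r.2 j))
                  = ∑ i, (r.1 i + r.2 i) := by
                rw [← Finset.sum_add_distrib]
                refine Finset.sum_congr rfl fun j _ => ?_
                have h := hrow j
                rw [Finset.sum_add_distrib] at h
                linear_combination (r.1 j + r.2 j) * h
              linear_combination (1-c) * key' 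
    have : c * S = c * ∑ i, q i := by linarith
    exact mul_left_cancel₀ (ne_of_gt hc0) this
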